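/- Fix ν₁ > 0 and ν₂ > 4 and let π(x) = (ν₁/ν₂)^{ν₁/2} x^{ν₁/2 − 1} / ( B(ν₁/2, ν₂/2) (1 + (ν₁/ν₂)x)^{(ν₁+ν₂)/2} ) for x ∈ (0, ∞) (the Fisher–Snedecor F density). Then its first moment is m₁ = ν₂/(ν₂ − 2), its variance is m₂ − m₁² = 2ν₂²(ν₁ + ν₂ − 2)/(ν₁ (ν₂ − 2)² (ν₂ − 4)); for the variance function σ²(x)/2 = x(1 + (ν₁/ν₂)x) the average variance is σ̂²/2 = ν₂(ν₁ + ν₂ − 2)/((ν₂ − 2)(ν₂ − 4)), and hence the optimal convergence rate is σ̂²/(2(m₂ − m₁²)) = ν₁(ν₂ − 2)/(2ν₂); moreover the detailed-balance drift μ(x) = (1/(2π(x)))(d/dx)(σ²(x)π(x)) is the affine function μ(x) = ν₁/2 − ν₁(1/2 − 1/ν₂)·x. -/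

import Mathlib

/-!
Under `x = t / (1 - t)` the Beta integral becomes
`∫₀^∞ x^(a-1) (1 + c x)^(-(a+b)) dx = c^(-a) B(a, b)`. The `F(ν₁, ν₂)` density is the normalised
integrand with `a = ν₁/2`, `b = ν₂/2`, `c = ν₁/ν₂`, and multiplying it by `x^k (1 + c x)^m` only
shifts the parameters to `(a + k, b - k - m)`. Each integral of the statement is therefore a ratio
`c^(-k) B(a + k, b - k - m) / B(a, b)`, which `Γ(s + 1) = s Γ(s)` turns into a rational function
of `ν₁, ν₂`. For the drift, `x (1 + c x) π(x)` is a constant multiple of `x^a (1 + c x)^(1-a-b)`,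
whose derivative is `(a + (1 - b) c x) π(x)`.
-/

open MeasureTheory Set ProbabilityTheory

namespace ProbabilityTheory

variable {a b : ℝ}

lemma beta_add_one_left (ha : a ≠ 0) (hab : a + b ≠ 0) :
    beta (a + 1) b = a / (a + b) * beta a b := by
  rw [beta, beta, add_right_comm, Real.Gamma_add_one ha, Real.Gamma_add_one hab,
    div_mul_div_comm, mul_assoc]

lemma beta_comm : beta a b = beta b a := by
  rw [beta, beta, mul_comm, add_comm]

lemma beta_add_one_right (hb : b ≠ 0) (hab : a + b ≠ 0) :
    beta a (b + 1) = b / (a + b) * beta a b := by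
  rw [beta_comm, beta_add_one_left hb (by rwa [add_comm]), add_comm, beta_comm]

lemma beta_add_one_sub_one_div_beta (ha : 0 < a) (hb : 1 < b) :
    beta (a + 1) (b - 1) / beta a b = a / (b - 1) := by
  have hb1 : 0 < b - 1 := sub_pos.2 hb
  have hab : a + (b - 1) ≠ 0 := by positivity
  have hstep := beta_add_one_right hb1.ne' hab
  rw [sub_add_cancel] at hstep
  have := beta_pos ha hb1
  rw [beta_add_one_left ha.ne' hab, hstep]
  field_simp

lemma beta_add_two_sub_two_div_beta (ha : 0 < a) (hb : 2 < b) :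
    beta (a + 2) (b - 2) / beta a b = a * (a + 1) / ((b - 1) * (b - 2)) := by
  have hstep :=
    beta_add_one_sub_one_div_beta (a := a + 1) (b := b - 1) (by positivity) (by linarith)
  rw [show a + 1 + 1 = a + 2 by ring, show b - 1 - 1 = b - 2 by ring] at hstep
  have := beta_pos (by positivity : 0 < a + 1) (by linarith : 0 < b - 1)
  rw [← div_mul_div_cancel₀ this.ne', hstep, beta_add_one_sub_one_div_beta ha (by linarith)]
  field_simp

lemma beta_add_one_sub_two_div_beta (ha : 0 < a) (hb : 2 < b) :
    beta (a + 1) (b - 2) / beta a b = a * (a + b - 1) / ((b - 1) * (b - 2)) := by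
  have hstep := beta_add_one_sub_one_div_beta (a := a) (b := b - 1) ha (by linarith)
  rw [show b - 1 - 1 = b - 2 by ring] at hstep
  have hb1 : 0 < b - 1 := by linarith
  have hrec := beta_add_one_right hb1.ne' (by positivity : a + (b - 1) ≠ 0)
  rw [sub_add_cancel] at hrec
  have := beta_pos ha hb1
  rw [← div_mul_div_cancel₀ this.ne', hstep, hrec]
  field_simp
  ring

lemma integral_rpow_mul_one_sub_rpow_eq_beta (ha : 0 < a) (hb : 0 < b) :
    ∫ t in (0 : ℝ)..1, t ^ (a - 1) * (1 - t) ^ (b - 1) = beta a b := by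
  have h : Complex.betaIntegral a b = ↑(∫ t in (0 : ℝ)..1, t ^ (a - 1) * (1 - t) ^ (b - 1)) := by
    rw [Complex.betaIntegral, ← intervalIntegral.integral_ofReal]
    refine intervalIntegral.integral_congr fun t ht => ?_
    rw [uIcc_of_le zero_le_one] at ht
    push_cast [Complex.ofReal_cpow ht.1, Complex.ofReal_cpow (sub_nonneg.2 ht.2)]
    rfl
  rw [beta_eq_betaIntegralReal a b ha hb, h, Complex.ofReal_re]

end ProbabilityTheory

section
variable {a b c : ℝ}

lemma image_div_one_sub_Ioo : (fun t : ℝ => t / (1 - t)) '' Ioo 0 1 = Ioi 0 := by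
  ext y
  constructor
  · rintro ⟨t, ⟨ht0, ht1⟩, rfl⟩
    exact div_pos ht0 (sub_pos.2 ht1)
  · intro (hy : 0 < y)
    refine ⟨y / (1 + y), ⟨by positivity, (div_lt_one (by positivity)).2 (by linarith)⟩, ?_⟩
    field_simp
    ring

lemma injOn_div_one_sub : InjOn (fun t : ℝ => t / (1 - t)) (Ioo 0 1) := by
  rintro s ⟨-, hs⟩ t ⟨-, ht⟩ (h : s / (1 - s) = t / (1 - t))
  rw [div_eq_div_iff (sub_pos.2 hs).ne' (sub_pos.2 ht).ne'] at h
  linarith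

lemma hasDerivAt_div_one_sub {t : ℝ} (ht : t ≠ 1) :
    HasDerivAt (fun t : ℝ => t / (1 - t)) ((1 - t) ^ 2)⁻¹ t := by
  have h1t : 1 - t ≠ 0 := sub_ne_zero.2 ht.symm
  refine ((hasDerivAt_id' t).div ((hasDerivAt_id' t).const_sub 1) h1t).congr_deriv ?_
  field_simp
  ring

lemma integral_Ioi_rpow_mul_one_add_rpow_eq_beta (ha : 0 < a) (hb : 0 < b) :
    ∫ x in Ioi 0, x ^ (a - 1) * (1 + x) ^ (-(a + b)) = beta a b := by
  rw [← image_div_one_sub_Ioo, integral_image_eq_integral_abs_deriv_smul measurableSet_Ioo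
    (fun t ht => (hasDerivAt_div_one_sub ht.2.ne).hasDerivWithinAt) injOn_div_one_sub,
    ← integral_rpow_mul_one_sub_rpow_eq_beta ha hb, intervalIntegral.integral_of_le zero_le_one,
    integral_Ioc_eq_integral_Ioo]
  refine setIntegral_congr_fun measurableSet_Ioo fun t ⟨ht0, ht1⟩ => ?_
  have h1t : 0 < 1 - t := sub_pos.2 ht1
  have hsum : 1 + t / (1 - t) = (1 - t)⁻¹ := by field_simp; ring
  rw [smul_eq_mul, hsum, abs_of_pos (by positivity), Real.div_rpow ht0.le h1t.le,
    Real.inv_rpow h1t.le, Real.rpow_neg h1t.le, inv_inv]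
  have hsplit : (1 - t) ^ (a + b) = (1 - t) ^ (a - 1) * (1 - t) ^ (b - 1) * (1 - t) ^ 2 := by
    rw [← Real.rpow_natCast, ← Real.rpow_add h1t, ← Real.rpow_add h1t]
    congr 1
    push_cast
    ring
  rw [hsplit]
  field_simp

lemma integral_Ioi_rpow_mul_one_add_mul_rpow_eq_beta (ha : 0 < a) (hb : 0 < b) (hc : 0 < c) :
    ∫ x in Ioi 0, x ^ (a - 1) * (1 + c * x) ^ (-(a + b)) = c ^ (-a) * beta a b := by
  have hscale := integral_comp_mul_left_Ioi (fun x => x ^ (a - 1) * (1 + x) ^ (-(a + b))) 0 hc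
  rw [mul_zero, integral_Ioi_rpow_mul_one_add_rpow_eq_beta ha hb, smul_eq_mul] at hscale
  have hpull : ∫ x in Ioi 0, (c * x) ^ (a - 1) * (1 + c * x) ^ (-(a + b))
      = c ^ (a - 1) * ∫ x in Ioi 0, x ^ (a - 1) * (1 + c * x) ^ (-(a + b)) := by
    rw [← integral_const_mul]
    refine setIntegral_congr_fun measurableSet_Ioi fun x (hx : 0 < x) => ?_
    rw [Real.mul_rpow hc.le hx.le, mul_assoc]
  have hca : c * c ^ (a - 1) = c ^ a := by
    rw [mul_comm, ← Real.rpow_add_one hc.ne', sub_add_cancel]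
  rw [hpull, eq_inv_mul_iff_mul_eq₀ hc.ne', ← mul_assoc, hca] at hscale
  rw [← hscale, ← mul_assoc, ← Real.rpow_add hc, neg_add_cancel, Real.rpow_zero, one_mul]

/-- The density of `X / c` for `X` beta-prime distributed with parameters `(a, b)`. -/
noncomputable def scaledBetaPrimePDF (a b c x : ℝ) : ℝ :=
  c ^ a * x ^ (a - 1) / (beta a b * (1 + c * x) ^ (a + b))

lemma scaledBetaPrimePDF_pos (ha : 0 < a) (hb : 0 < b) (hc : 0 < c) {x : ℝ} (hx : 0 < x) :
    0 < scaledBetaPrimePDF a b c x := by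
  have := beta_pos ha hb
  unfold scaledBetaPrimePDF
  positivity

lemma integral_rpow_mul_one_add_mul_rpow_mul_scaledBetaPrimePDF {k m : ℝ} (hak : 0 < a + k)
    (hbkm : 0 < b - k - m) (hc : 0 < c) :
    ∫ x in Ioi 0, x ^ k * (1 + c * x) ^ m * scaledBetaPrimePDF a b c x
      = c ^ (-k) * beta (a + k) (b - k - m) / beta a b := by
  have hpoint : ∀ x ∈ Ioi (0 : ℝ), x ^ k * (1 + c * x) ^ m * scaledBetaPrimePDF a b c x
      = c ^ a / beta a b * (x ^ (a + k - 1) * (1 + c * x) ^ (-(a + k + (b - k - m)))) := by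
    intro x (hx : 0 < x)
    have hcx : 0 < 1 + c * x := by positivity
    have hxpow : x ^ (a + k - 1) = x ^ k * x ^ (a - 1) := by
      rw [← Real.rpow_add hx]; ring_nf
    have hcxpow :
        (1 + c * x) ^ (-(a + k + (b - k - m))) = (1 + c * x) ^ m / (1 + c * x) ^ (a + b) := by
      rw [← Real.rpow_sub hcx]; ring_nf
    rw [scaledBetaPrimePDF, hxpow, hcxpow]
    ring
  rw [setIntegral_congr_fun measurableSet_Ioi hpoint, integral_const_mul,
    integral_Ioi_rpow_mul_one_add_mul_rpow_eq_beta hak hbkm hc, ← mul_assoc,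
    div_mul_eq_mul_div, ← Real.rpow_add hc]
  ring_nf

lemma integral_mul_scaledBetaPrimePDF (ha : 0 < a) (hb : 1 < b) (hc : 0 < c) :
    ∫ x in Ioi 0, x * scaledBetaPrimePDF a b c x = a / (c * (b - 1)) := by
  have h := integral_rpow_mul_one_add_mul_rpow_mul_scaledBetaPrimePDF (a := a) (b := b)
    (k := 1) (m := 0) (by linarith) (by linarith) hc
  simp only [Real.rpow_one, Real.rpow_zero, mul_one, sub_zero] at h
  rw [h, mul_div_assoc, beta_add_one_sub_one_div_beta ha hb, Real.rpow_neg_one]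
  field_simp

lemma integral_sq_mul_scaledBetaPrimePDF (ha : 0 < a) (hb : 2 < b) (hc : 0 < c) :
    ∫ x in Ioi 0, x ^ 2 * scaledBetaPrimePDF a b c x
      = a * (a + 1) / (c ^ 2 * ((b - 1) * (b - 2))) := by
  have h := integral_rpow_mul_one_add_mul_rpow_mul_scaledBetaPrimePDF (a := a) (b := b)
    (k := 2) (m := 0) (by linarith) (by linarith) hc
  simp only [Real.rpow_two, Real.rpow_zero, mul_one, sub_zero] at h
  rw [h, mul_div_assoc, beta_add_two_sub_two_div_beta ha hb, Real.rpow_neg hc.le, Real.rpow_two]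
  field_simp

lemma integral_mul_one_add_mul_mul_scaledBetaPrimePDF (ha : 0 < a) (hb : 2 < b) (hc : 0 < c) :
    ∫ x in Ioi 0, x * (1 + c * x) * scaledBetaPrimePDF a b c x
      = a * (a + b - 1) / (c * ((b - 1) * (b - 2))) := by
  have h := integral_rpow_mul_one_add_mul_rpow_mul_scaledBetaPrimePDF (a := a) (b := b)
    (k := 1) (m := 1) (by linarith) (by linarith) hc
  simp only [Real.rpow_one, show b - 1 - 1 = b - 2 by ring] at h
  rw [h, mul_div_assoc, beta_add_one_sub_two_div_beta ha hb, Real.rpow_neg_one]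
  field_simp

lemma hasDerivAt_mul_one_add_mul_mul_scaledBetaPrimePDF (hc : 0 ≤ c) {x : ℝ} (hx : 0 < x) :
    HasDerivAt (fun y => y * (1 + c * y) * scaledBetaPrimePDF a b c y)
      ((a + (1 - b) * c * x) * scaledBetaPrimePDF a b c x) x := by
  have hrpow_eq_mul (y : ℝ) (hy : 0 < y) : y ^ a = y ^ (a - 1) * y := by
    rw [← Real.rpow_add_one hy.ne', sub_add_cancel]
  have hrpow_one_sub (y : ℝ) (hy : 0 < y) : y ^ (1 - (a + b)) = y / y ^ (a + b) := by
    rw [Real.rpow_sub hy, Real.rpow_one]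
  have hlocal : (fun y => y * (1 + c * y) * scaledBetaPrimePDF a b c y)
      =ᶠ[nhds x] fun y => c ^ a / beta a b * (y ^ a * (1 + c * y) ^ (1 - (a + b))) := by
    filter_upwards [Ioi_mem_nhds hx] with y (hy : 0 < y)
    rw [scaledBetaPrimePDF, hrpow_eq_mul y hy, hrpow_one_sub _ (by positivity)]
    ring
  have hcx : 0 < 1 + c * x := by positivity
  have hbase : HasDerivAt (fun y => 1 + c * y) c x := by
    simpa using ((hasDerivAt_id x).const_mul c).const_add 1
  have hderiv := ((Real.hasDerivAt_rpow_const (p := a) (Or.inl hx.ne')).mul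
    (hbase.rpow_const (p := 1 - (a + b)) (Or.inl hcx.ne'))).const_mul (c ^ a / beta a b)
  refine (hderiv.congr_of_eventuallyEq hlocal).congr_deriv ?_
  rw [scaledBetaPrimePDF, hrpow_eq_mul x hx, hrpow_one_sub _ hcx,
    show 1 - (a + b) - 1 = -(a + b) by ring, Real.rpow_neg hcx.le]
  field_simp
  ring

end

noncomputable def fisherPDF (ν₁ ν₂ : ℝ) : ℝ → ℝ :=
  scaledBetaPrimePDF (ν₁ / 2) (ν₂ / 2) (ν₁ / ν₂)

section
variable {ν₁ ν₂ : ℝ}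

lemma integral_mul_fisherPDF (h₁ : 0 < ν₁) (h₂ : 2 < ν₂) :
    ∫ x in Ioi 0, x * fisherPDF ν₁ ν₂ x = ν₂ / (ν₂ - 2) := by
  have hb₁ : ν₂ / 2 - 1 ≠ 0 := by linarith
  rw [fisherPDF, integral_mul_scaledBetaPrimePDF (by positivity) (by linarith) (by positivity)]
  field_simp

lemma integral_sq_mul_fisherPDF (h₁ : 0 < ν₁) (h₂ : 4 < ν₂) :
    ∫ x in Ioi 0, x ^ 2 * fisherPDF ν₁ ν₂ x = ν₂ ^ 2 * (ν₁ + 2) / (ν₁ * (ν₂ - 2) * (ν₂ - 4)) := by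
  have hb₁ : ν₂ / 2 - 1 ≠ 0 := by linarith
  have hb₂ : ν₂ / 2 - 2 ≠ 0 := by linarith
  rw [fisherPDF, integral_sq_mul_scaledBetaPrimePDF (by positivity) (by linarith) (by positivity)]
  field_simp
  ring

lemma integral_mul_one_add_mul_mul_fisherPDF (h₁ : 0 < ν₁) (h₂ : 4 < ν₂) :
    ∫ x in Ioi 0, x * (1 + ν₁ / ν₂ * x) * fisherPDF ν₁ ν₂ x
      = ν₂ * (ν₁ + ν₂ - 2) / ((ν₂ - 2) * (ν₂ - 4)) := by
  have hb₁ : ν₂ / 2 - 1 ≠ 0 := by linarith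
  have hb₂ : ν₂ / 2 - 2 ≠ 0 := by linarith
  rw [fisherPDF,
    integral_mul_one_add_mul_mul_scaledBetaPrimePDF (by positivity) (by linarith) (by positivity)]
  field_simp
  ring

lemma hasDerivAt_mul_one_add_mul_mul_fisherPDF (h₁ : 0 < ν₁) (h₂ : 0 < ν₂) {x : ℝ} (hx : 0 < x) :
    HasDerivAt (fun y => 2 * (y * (1 + ν₁ / ν₂ * y)) * fisherPDF ν₁ ν₂ y)
      (2 * (ν₁ / 2 - ν₁ * (1 / 2 - 1 / ν₂) * x) * fisherPDF ν₁ ν₂ x) x := by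
  have h := (hasDerivAt_mul_one_add_mul_mul_scaledBetaPrimePDF (a := ν₁ / 2) (b := ν₂ / 2)
    (by positivity : 0 ≤ ν₁ / ν₂) hx).const_mul 2
  refine (h.congr_deriv ?_).congr_of_eventuallyEq (.of_forall fun y => ?_)
  · rw [fisherPDF]
    field_simp
    ring
  · rw [fisherPDF]
    ring

end

/-- For the Fisher–Snedecor `F` density (`ν₁ > 0`, `ν₂ > 4`)
`ρ(x) = (ν₁/ν₂)^{ν₁/2} x^{ν₁/2-1} / (B(ν₁/2, ν₂/2) (1+(ν₁/ν₂)x)^{(ν₁+ν₂)/2})` on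
`(0, ∞)`: its first moment is `m₁ = ν₂/(ν₂-2)`, its variance is
`m₂ - m₁² = 2ν₂²(ν₁+ν₂-2)/(ν₁(ν₂-2)²(ν₂-4))`; for the variance function
`σ²(x)/2 = x(1+(ν₁/ν₂)x)` the average variance is
`σ̂²/2 = ν₂(ν₁+ν₂-2)/((ν₂-2)(ν₂-4))`, hence the optimal rate is
`σ̂²/(2(m₂-m₁²)) = ν₁(ν₂-2)/(2ν₂)`; moreover the detailed-balance drift
`μ(x) = (1/(2ρ(x)))(d/dx)(σ²(x)ρ(x))` is the affine function
`μ(x) = ν₁/2 - ν₁(1/2 - 1/ν₂)x`. -/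
theorem statement16
    (ν₁ ν₂ : ℝ) (h₁ : 0 < ν₁) (h₂ : 4 < ν₂)
    (B : ℝ → ℝ → ℝ)
    (hB : ∀ a b, B a b = Real.Gamma a * Real.Gamma b / Real.Gamma (a + b))
    (ρ : ℝ → ℝ)
    (hρ : ∀ x, ρ x = (ν₁ / ν₂) ^ (ν₁ / 2) * x ^ (ν₁ / 2 - 1) /
        (B (ν₁ / 2) (ν₂ / 2) * (1 + ν₁ / ν₂ * x) ^ ((ν₁ + ν₂) / 2))) :
    (∫ x in Set.Ioi (0 : ℝ), x * ρ x) = ν₂ / (ν₂ - 2) ∧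
    (∫ x in Set.Ioi (0 : ℝ), x ^ 2 * ρ x) - (∫ x in Set.Ioi (0 : ℝ), x * ρ x) ^ 2
        = 2 * ν₂ ^ 2 * (ν₁ + ν₂ - 2) / (ν₁ * (ν₂ - 2) ^ 2 * (ν₂ - 4)) ∧
    (∫ x in Set.Ioi (0 : ℝ), x * (1 + ν₁ / ν₂ * x) * ρ x)
        = ν₂ * (ν₁ + ν₂ - 2) / ((ν₂ - 2) * (ν₂ - 4)) ∧
    (∫ x in Set.Ioi (0 : ℝ), x * (1 + ν₁ / ν₂ * x) * ρ x) /
        ((∫ x in Set.Ioi (0 : ℝ), x ^ 2 * ρ x) - (∫ x in Set.Ioi (0 : ℝ), x * ρ x) ^ 2)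
        = ν₁ * (ν₂ - 2) / (2 * ν₂) ∧
    ∀ x ∈ Set.Ioi (0 : ℝ),
      1 / (2 * ρ x) * deriv (fun y => 2 * (y * (1 + ν₁ / ν₂ * y)) * ρ y) x
        = ν₁ / 2 - ν₁ * (1 / 2 - 1 / ν₂) * x := by
  have hρF : ρ = fisherPDF ν₁ ν₂ := by
    funext x
    rw [hρ, hB, fisherPDF, scaledBetaPrimePDF, beta, add_div]
  subst hρF
  have h₂' : ν₂ - 2 ≠ 0 := by linarith
  have h₄' : ν₂ - 4 ≠ 0 := by linarith
  have hvar : (∫ x in Ioi 0, x ^ 2 * fisherPDF ν₁ ν₂ x) - (∫ x in Ioi 0, x * fisherPDF ν₁ ν₂ x) ^ 2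
      = 2 * ν₂ ^ 2 * (ν₁ + ν₂ - 2) / (ν₁ * (ν₂ - 2) ^ 2 * (ν₂ - 4)) := by
    rw [integral_sq_mul_fisherPDF h₁ h₂, integral_mul_fisherPDF h₁ (by linarith)]
    field_simp
    ring
  have havg := integral_mul_one_add_mul_mul_fisherPDF h₁ h₂
  refine ⟨integral_mul_fisherPDF h₁ (by linarith), hvar, havg, ?_, fun x (hx : 0 < x) => ?_⟩
  · have hν : ν₁ + ν₂ - 2 ≠ 0 := by linarith
    rw [havg, hvar]
    field_simp
  · have hpos : 0 < fisherPDF ν₁ ν₂ x :=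
      scaledBetaPrimePDF_pos (by positivity) (by linarith) (by positivity) hx
    rw [(hasDerivAt_mul_one_add_mul_mul_fisherPDF h₁ (by linarith) hx).deriv]
    field_simp
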